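/- Let φ = (1+√5)/2 be the golden ratio. Then Li₂(1/φ²) = π²/15 - ln²(φ). -/

import Mathlib

/-!
Since `Li₂'(x) = -log(1 - x)/x`, three combinations of dilogarithms have zero derivative and are
therefore constant: the duplication formula `Li₂(x) + Li₂(-x) = Li₂(x²)/2`, Landen's identity
`Li₂(x) + Li₂(-x/(1-x)) = -log²(1-x)/2` and Euler's reflection formula
`Li₂(x) + Li₂(1-x) + log x log(1-x) = π²/6`. The constant in the last one is `Li₂(1) = ζ(2)`,
obtained by integrating `-log(1-t)/t = ∑ tⁿ/(n+1)` termwise. At `x = φ⁻²`, where `1 - x = φ⁻¹`,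
the three formulas are linear equations in `Li₂(φ⁻²)`, `Li₂(φ⁻¹)` and `Li₂(-φ⁻¹)`.
-/

open Real MeasureTheory

noncomputable def Li2 (x : ℝ) : ℝ := -∫ t in (0:ℝ)..x, Real.log (1 - t) / t

open Set intervalIntegral

lemma Li2_zero : Li2 0 = 0 := by simp [Li2]

lemma dslope_log_one_sub {t : ℝ} (ht : t ≠ 0) :
    dslope (fun t => log (1 - t)) 0 t = log (1 - t) / t := by
  simp [dslope_of_ne _ ht, slope_def_field]

lemma continuousOn_dslope_log_one_sub :
    ContinuousOn (dslope (fun t => log (1 - t)) 0) (Iio 1) := by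
  have hdiff : ∀ x ∈ Iio (1 : ℝ), DifferentiableAt ℝ (fun t => log (1 - t)) x := fun x hx =>
    ((differentiableAt_const 1).sub differentiableAt_id).log (sub_ne_zero.2 (ne_of_gt hx))
  exact (continuousOn_dslope (Iio_mem_nhds one_pos)).2
    ⟨fun x hx => (hdiff x hx).continuousAt.continuousWithinAt, hdiff 0 (mem_Iio.2 one_pos)⟩

-- `dslope` replaces the junk value `0` of `log (1 - t) / t` at `t = 0` by the limit `-1`,
-- making the integrand continuous on `(-∞, 1)`.
lemma Li2_eq_neg_integral_dslope (x : ℝ) :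
    Li2 x = -∫ t in (0:ℝ)..x, dslope (fun t => log (1 - t)) 0 t := by
  refine congrArg Neg.neg (integral_congr_ae ?_)
  filter_upwards [Measure.ae_ne volume 0] with t ht _
  rw [dslope_log_one_sub ht]

lemma hasDerivAt_Li2 {x : ℝ} (hx : x < 1) :
    HasDerivAt Li2 (-dslope (fun t => log (1 - t)) 0 x) x := by
  have hcont := continuousOn_dslope_log_one_sub
  have hint : IntervalIntegrable (dslope (fun t => log (1 - t)) 0) volume 0 x :=
    (hcont.mono fun t ht => lt_of_le_of_lt ht.2 (max_lt one_pos hx)).intervalIntegrable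
  have hFTC := integral_hasDerivAt_right hint
    (hcont.stronglyMeasurableAtFilter isOpen_Iio x hx) (hcont.continuousAt (Iio_mem_nhds hx))
  rw [show Li2 = _ from funext Li2_eq_neg_integral_dslope]
  exact hFTC.neg

lemma hasDerivAt_Li2_of_ne_zero {x : ℝ} (hx : x < 1) (hx0 : x ≠ 0) :
    HasDerivAt Li2 (-(log (1 - x) / x)) x := by
  simpa only [dslope_log_one_sub hx0] using hasDerivAt_Li2 hx

lemma IsOpen.eq_of_hasDerivAt_zero {E : Type*} [NormedAddCommGroup E] [NormedSpace ℝ E]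
    {f : ℝ → E} {s : Set ℝ} (hs : IsOpen s) (hs' : IsPreconnected s)
    (hf : ∀ x ∈ s, HasDerivAt f 0 x) {x y : ℝ} (hx : x ∈ s) (hy : y ∈ s) : f x = f y :=
  hs.is_const_of_deriv_eq_zero hs' (fun z hz => (hf z hz).differentiableAt.differentiableWithinAt)
    (fun z hz => (hf z hz).deriv) hx hy

lemma Li2_add_Li2_neg {x : ℝ} (hx : x ∈ Ioo (-1) 1) : Li2 x + Li2 (-x) = Li2 (x ^ 2) / 2 := by
  have hderiv : ∀ y ∈ Ioo (-1 : ℝ) 1,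
      HasDerivAt (fun z => Li2 z + Li2 (-z) - Li2 (z ^ 2) / 2) 0 y := by
    rintro y ⟨hy₀, hy₁⟩
    have hd := ((hasDerivAt_Li2 hy₁).add
      ((hasDerivAt_Li2 (by linarith : -y < 1)).comp y (hasDerivAt_neg y))).sub
      (((hasDerivAt_Li2 (x := y ^ 2) (by nlinarith)).comp y (hasDerivAt_pow 2 y)).div_const 2)
    refine hd.congr_deriv ?_
    rcases eq_or_ne y 0 with rfl | hy
    · simp
    · rw [dslope_log_one_sub hy, dslope_log_one_sub (neg_ne_zero.2 hy),
        dslope_log_one_sub (pow_ne_zero 2 hy),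
        show 1 - y ^ 2 = (1 - y) * (1 + y) by ring, log_mul (by linarith) (by linarith)]
      field_simp
      norm_num
      ring
  have := isOpen_Ioo.eq_of_hasDerivAt_zero isPreconnected_Ioo hderiv hx
    (show (0 : ℝ) ∈ Ioo (-1) 1 by norm_num)
  simp only [neg_zero, Li2_zero, ne_eq, OfNat.ofNat_ne_zero, not_false_eq_true, zero_pow] at this
  linarith

lemma Li2_add_Li2_neg_div_one_sub {x : ℝ} (hx : x < 1) :
    Li2 x + Li2 (-x / (1 - x)) = -log (1 - x) ^ 2 / 2 := by
  have hderiv : ∀ y ∈ Iio (1 : ℝ),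
      HasDerivAt (fun z => Li2 z + Li2 (-z / (1 - z)) + log (1 - z) ^ 2 / 2) 0 y := by
    intro y (hy : y < 1)
    have h1y : 1 - y ≠ 0 := sub_ne_zero.2 (ne_of_gt hy)
    have hsub : HasDerivAt (fun z => 1 - z) (-1) y := by
      simpa using (hasDerivAt_id y).const_sub 1
    have hu : -y / (1 - y) < 1 := by
      rw [div_lt_one (by linarith)]
      linarith
    have hd := ((hasDerivAt_Li2 hy).add
      ((hasDerivAt_Li2 hu).comp y ((hasDerivAt_neg y).div hsub h1y))).add
      (((hsub.log h1y).pow 2).div_const 2)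
    refine hd.congr_deriv ?_
    rcases eq_or_ne y 0 with rfl | hy0
    · simp
    · rw [dslope_log_one_sub hy0, dslope_log_one_sub (div_ne_zero (neg_ne_zero.2 hy0) h1y),
        show 1 - -y / (1 - y) = (1 - y)⁻¹ by field_simp; ring, log_inv]
      field_simp
      ring
  have := isOpen_Iio.eq_of_hasDerivAt_zero isPreconnected_Iio hderiv hx
    (show (0 : ℝ) ∈ Iio 1 by norm_num)
  simp only [neg_zero, sub_zero, zero_div, Li2_zero, log_one] at this
  linarith

lemma hasSum_pow_div_succ {t : ℝ} (h0 : t ≠ 0) (h1 : |t| < 1) :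
    HasSum (fun n : ℕ => t ^ n / (n + 1)) (-(log (1 - t) / t)) := by
  have h := (hasSum_pow_div_log_of_abs_lt_one h1).div_const t
  have hterm : (fun n : ℕ => t ^ (n + 1) / (n + 1) / t) = fun n : ℕ => t ^ n / (n + 1) := by
    funext n
    rw [pow_succ]
    field_simp
  rwa [hterm, neg_div] at h

lemma hasSum_one_div_succ_sq : HasSum (fun n : ℕ => 1 / ((n : ℝ) + 1) ^ 2) (π ^ 2 / 6) := by
  simpa using (hasSum_nat_add_iff' 1).2 hasSum_zeta_two

lemma pow_succ_div_succ_sq_le {x : ℝ} (hx : x ∈ Icc 0 1) (n : ℕ) :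
    x ^ (n + 1) / ((n : ℝ) + 1) ^ 2 ≤ 1 / ((n : ℝ) + 1) ^ 2 := by
  gcongr
  exact pow_le_one₀ hx.1 hx.2

lemma hasSum_Li2 {x : ℝ} (hx : x ∈ Icc 0 1) :
    HasSum (fun n : ℕ => x ^ (n + 1) / (n + 1) ^ 2) (Li2 x) := by
  obtain ⟨hx0, hx1⟩ := hx
  have hint : ∀ n : ℕ, IntegrableOn (fun t : ℝ => t ^ n / (n + 1)) (Ioo 0 x) :=
    fun n => ((continuous_pow n).div_const _).integrableOn_Icc.mono_set Ioo_subset_Icc_self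
  have hterm : ∀ n : ℕ, ∫ t in Ioo 0 x, t ^ n / (n + 1) = x ^ (n + 1) / (n + 1) ^ 2 := by
    intro n
    rw [← integral_Ioc_eq_integral_Ioo, ← intervalIntegral.integral_of_le hx0,
      intervalIntegral.integral_div, integral_pow]
    field_simp
    ring
  have hnorm : ∀ n : ℕ, ∫ t in Ioo 0 x, ‖t ^ n / (n + 1)‖ = x ^ (n + 1) / (n + 1) ^ 2 := by
    intro n
    rw [← hterm n]
    refine setIntegral_congr_fun measurableSet_Ioo fun t ht => norm_of_nonneg ?_
    have := ht.1
    positivity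
  have hsum : Summable fun n : ℕ => x ^ (n + 1) / (n + 1) ^ 2 :=
    hasSum_one_div_succ_sq.summable.of_nonneg_of_le (fun n => by positivity)
      (pow_succ_div_succ_sq_le ⟨hx0, hx1⟩)
  have hLi2 : Li2 x = ∫ t in Ioo 0 x, ∑' n : ℕ, t ^ n / (n + 1) := by
    rw [Li2, intervalIntegral.integral_of_le hx0, integral_Ioc_eq_integral_Ioo,
      ← MeasureTheory.integral_neg]
    refine setIntegral_congr_fun measurableSet_Ioo fun t ht => ?_
    have ht1 : |t| < 1 := abs_lt.2 ⟨by linarith [ht.1], by linarith [ht.2]⟩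
    exact (hasSum_pow_div_succ ht.1.ne' ht1).tsum_eq.symm
  simpa only [hterm, hLi2] using
    hasSum_integral_of_summable_integral_norm hint (by simpa only [hnorm] using hsum)

lemma Li2_one : Li2 1 = π ^ 2 / 6 :=
  (hasSum_Li2 ⟨zero_le_one, le_rfl⟩).unique (by simpa using hasSum_one_div_succ_sq)

lemma continuousOn_Li2 : ContinuousOn Li2 (Icc 0 1) := by
  have hseries : ContinuousOn (fun x : ℝ => ∑' n : ℕ, x ^ (n + 1) / (n + 1) ^ 2) (Icc 0 1) := by
    refine continuousOn_tsum (fun n => ((continuous_pow _).div_const _).continuousOn)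
      hasSum_one_div_succ_sq.summable fun n x hx => ?_
    rw [norm_of_nonneg (by have := hx.1; positivity)]
    exact pow_succ_div_succ_sq_le hx n
  exact hseries.congr fun x hx => (hasSum_Li2 hx).tsum_eq.symm

-- The product equals `-(dslope log 1 y) * ((1 - y) * log (1 - y))` (also at `y = 1`, where both
-- sides vanish), and both factors are continuous at `y = 1`.
lemma continuousAt_log_mul_log_one_sub {x : ℝ} (hx : x ≠ 0) :
    ContinuousAt (fun y => log y * log (1 - y)) x := by
  have heq : (fun y => log y * log (1 - y)) =
      fun y => -(dslope log 1 y * ((1 - y) * log (1 - y))) := by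
    funext y
    rcases eq_or_ne y 1 with rfl | hy
    · simp
    · rw [dslope_of_ne _ hy, slope_def_field, log_one]
      field_simp [sub_ne_zero.2 hy, sub_ne_zero.2 hy.symm]
      ring
  have hslope : ContinuousAt (dslope log 1) x := by
    rcases eq_or_ne x 1 with rfl | hx1
    · exact continuousAt_dslope_same.2 (differentiableAt_log one_ne_zero)
    · exact (continuousAt_dslope_of_ne hx1).2 (continuousAt_log hx)
  rw [heq]
  exact (hslope.mul (continuous_mul_log.comp (continuous_const.sub continuous_id)).continuousAt).neg

lemma Li2_add_Li2_one_sub {x : ℝ} (hx0 : 0 < x) (hx1 : x ≤ 1) :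
    Li2 x + Li2 (1 - x) + log x * log (1 - x) = π ^ 2 / 6 := by
  set F : ℝ → ℝ := fun y => Li2 y + Li2 (1 - y) + log y * log (1 - y)
  have hcont : ContinuousOn F (Icc x 1) := by
    refine ((continuousOn_Li2.mono (Icc_subset_Icc_left hx0.le)).add
      (continuousOn_Li2.comp (continuous_sub_left 1).continuousOn
        fun y hy => show 1 - y ∈ Icc 0 1 from ⟨by linarith [hy.2], by linarith [hy.1]⟩)).add
      fun y hy => (continuousAt_log_mul_log_one_sub (by linarith [hy.1])).continuousWithinAt
  have hderiv : ∀ y ∈ Ico x 1, HasDerivWithinAt F 0 (Ici y) y := by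
    rintro y ⟨hxy, hy1⟩
    have hy0 : y ≠ 0 := by linarith
    have h1y : 1 - y ≠ 0 := by linarith
    have hsub : HasDerivAt (fun z => 1 - z) (-1) y := by
      simpa using (hasDerivAt_id y).const_sub 1
    have hd := ((hasDerivAt_Li2_of_ne_zero hy1 hy0).add
      ((hasDerivAt_Li2_of_ne_zero (x := 1 - y) (by linarith) h1y).comp y hsub)).add
      ((hasDerivAt_log hy0).mul (hsub.log h1y))
    refine (hd.congr_deriv ?_).hasDerivWithinAt
    rw [sub_sub_cancel]
    field_simp
    ring
  -- `F 1 = Li2 1` since `log 1 * log 0 = 0`.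
  have := constant_of_has_deriv_right_zero hcont hderiv 1 ⟨hx1, le_rfl⟩
  simp only [F, sub_self, Li2_one, Li2_zero, log_one, zero_mul, add_zero] at this
  exact this.symm

open scoped goldenRatio in
theorem Li2_inv_phi_sq :
    Li2 (1 / ((1 + Real.sqrt 5) / 2) ^ 2)
      = Real.pi ^ 2 / 15 - (Real.log ((1 + Real.sqrt 5) / 2)) ^ 2 := by
  change Li2 (1 / φ ^ 2) = π ^ 2 / 15 - log φ ^ 2
  set y := φ⁻¹ with hy
  have hy0 : 0 < y := inv_pos.2 goldenRatio_pos
  have hy1 : y < 1 := inv_lt_one_of_one_lt₀ one_lt_goldenRatio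
  have hone_sub : 1 - y ^ 2 = y := by
    rw [hy, inv_goldenRatio, neg_sq, goldenConj_sq]
    ring
  have hneg : -y ^ 2 / y = -y := by field_simp
  have hlog : log y = -log φ := log_inv φ
  have hdup := Li2_add_Li2_neg ⟨by linarith, hy1⟩
  have hlanden := Li2_add_Li2_neg_div_one_sub (x := y ^ 2) (by nlinarith)
  rw [hone_sub, hneg, hlog] at hlanden
  have hrefl := Li2_add_Li2_one_sub (x := y ^ 2) (by positivity) (by nlinarith)
  rw [hone_sub, log_pow, hlog] at hrefl
  rw [one_div, ← inv_pow]
  linear_combination (2 / 5) * (hlanden + hrefl - hdup)
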